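/- arXiv:2602.09320 — 2 statements merged into one kernel-verified Lean document; each statement's English description precedes it below -/
import Mathlib

section
/- Let $(A,\cdot,\circ)$ be a skew brace, let $\lambda,\rho:(A,\circ)\to\mathrm{Aut}(A,\cdot)$ be the homomorphisms $\lambda_a(x)=a^{-1}(a\circ x)$ and $\rho_a(x)=(a\circ x)a^{-1}$, and let $\mathrm{Inn}(A,\cdot)$ denote the inner automorphism group of $(A,\cdot)$. Then $\mathrm{Im}(\lambda)\,\mathrm{Im}(\rho)=\mathrm{Im}(\lambda)\,\mathrm{Inn}(A,\cdot)=\mathrm{Im}(\rho)\,\mathrm{Inn}(A,\cdot)$ as subsets of $\mathrm{Aut}(A,\cdot)$. -/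
/-- A skew brace structure on a group `(A, *)`: a second group operation `circ`
(with identity `e` and inverse `cinv`) satisfying the brace relation
`a ∘ (b * c) = (a ∘ b) * a⁻¹ * (a ∘ c)`. -/
structure SkewBrace (A : Type*) [Group A] where
  circ : A → A → A
  circ_assoc : ∀ a b c : A, circ (circ a b) c = circ a (circ b c)
  e : A
  e_circ : ∀ a : A, circ e a = a
  circ_e : ∀ a : A, circ a e = a
  cinv : A → A
  cinv_circ : ∀ a : A, circ (cinv a) a = e
  circ_cinv : ∀ a : A, circ a (cinv a) = e
  brace : ∀ a b c : A, circ a (b * c) = circ a b * a⁻¹ * circ a c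

namespace SkewBrace

variable {A : Type*} [Group A] (B : SkewBrace A)

lemma circ_one (a : A) : B.circ a 1 = a := by
  have h := B.brace a 1 1
  rw [mul_one] at h
  have h2 : B.circ a 1 * 1 = B.circ a 1 * (a⁻¹ * B.circ a 1) := by
    rw [mul_one, ← mul_assoc]; exact h
  have h3 := mul_left_cancel h2
  rw [eq_comm, inv_mul_eq_one] at h3
  exact h3.symm

lemma e_eq_one : B.e = 1 := by
  have := B.circ_one B.e
  rw [B.e_circ 1] at this
  exact this.symm

lemma cinv_cinv (a : A) : B.cinv (B.cinv a) = a := by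
  calc B.cinv (B.cinv a) = B.circ (B.cinv (B.cinv a)) B.e := (B.circ_e _).symm
    _ = B.circ (B.cinv (B.cinv a)) (B.circ (B.cinv a) a) := by rw [B.cinv_circ]
    _ = B.circ (B.circ (B.cinv (B.cinv a)) (B.cinv a)) a := (B.circ_assoc _ _ _).symm
    _ = B.circ B.e a := by rw [B.cinv_circ]
    _ = a := B.e_circ a

lemma lam_lam (a b x : A) :
    a⁻¹ * B.circ a (b⁻¹ * B.circ b x) = (B.circ a b)⁻¹ * B.circ (B.circ a b) x := by
  have h := B.brace a b (b⁻¹ * B.circ b x)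
  rw [mul_inv_cancel_left, ← B.circ_assoc] at h
  rw [h]
  group

/-- The automorphism `λ_a : x ↦ a⁻¹ (a ∘ x)`. -/
def lam (a : A) : MulAut A where
  toFun x := a⁻¹ * B.circ a x
  invFun x := (B.cinv a)⁻¹ * B.circ (B.cinv a) x
  left_inv x := by
    show (B.cinv a)⁻¹ * B.circ (B.cinv a) (a⁻¹ * B.circ a x) = x
    rw [B.lam_lam, B.cinv_circ, B.e_circ, B.e_eq_one, inv_one, one_mul]
  right_inv x := by
    show a⁻¹ * B.circ a ((B.cinv a)⁻¹ * B.circ (B.cinv a) x) = x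
    rw [B.lam_lam, B.circ_cinv, B.e_circ, B.e_eq_one, inv_one, one_mul]
  map_mul' x y := by
    show a⁻¹ * B.circ a (x * y) = (a⁻¹ * B.circ a x) * (a⁻¹ * B.circ a y)
    rw [B.brace]; group

@[simp] lemma lam_apply (a x : A) : B.lam a x = a⁻¹ * B.circ a x := rfl

lemma lam_mul (a b : A) : B.lam a * B.lam b = B.lam (B.circ a b) := by
  ext x
  exact B.lam_lam a b x

lemma lam_e : B.lam B.e = 1 := by
  ext x
  rw [lam_apply, B.e_circ, B.e_eq_one, inv_one, one_mul, MulAut.one_apply]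

/-- The automorphism `ρ_a : x ↦ (a ∘ x) a⁻¹`. -/
def rho (a : A) : MulAut A := MulAut.conj a * B.lam a

lemma rho_apply (a x : A) : B.rho a x = B.circ a x * a⁻¹ := by
  simp [rho, MulAut.conj_apply, mul_assoc]

lemma conj_swap (f : MulAut A) (b : A) :
    f * MulAut.conj b = MulAut.conj (f b) * f := by
  ext x
  show f (b * x * b⁻¹) = f b * f x * (f b)⁻¹
  rw [map_mul, map_mul, map_inv]

lemma conj_swap' (f : MulAut A) (b : A) :
    MulAut.conj b * f = f * MulAut.conj (f⁻¹ b) := by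
  have h := conj_swap f (f⁻¹ b)
  rwa [MulAut.apply_inv_self, eq_comm] at h

lemma conj_eq (c : A) :
    B.lam c⁻¹ * B.rho (B.cinv c⁻¹) = MulAut.conj c := by
  set b := B.cinv c⁻¹ with hb
  have hcb : B.cinv b = c⁻¹ := by rw [hb, B.cinv_cinv]
  calc B.lam c⁻¹ * B.rho b = B.lam (B.cinv b) * (MulAut.conj b * B.lam b) := by rw [hcb, rho]
    _ = (B.lam (B.cinv b) * MulAut.conj b) * B.lam b := by rw [mul_assoc]
    _ = (MulAut.conj (B.lam (B.cinv b) b) * B.lam (B.cinv b)) * B.lam b := by rw [conj_swap]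
    _ = MulAut.conj (B.lam (B.cinv b) b) * B.lam (B.circ (B.cinv b) b) := by
        rw [mul_assoc, B.lam_mul]
    _ = MulAut.conj (B.lam (B.cinv b) b) * 1 := by rw [B.cinv_circ, B.lam_e]
    _ = MulAut.conj c := by
        rw [mul_one, lam_apply, B.cinv_circ, B.e_eq_one, hcb, inv_inv, mul_one]

lemma key1 (a b : A) :
    B.lam a * B.rho b
      = B.lam (B.circ a b) * MulAut.conj ((B.lam (B.circ a b))⁻¹ (B.lam a b)) := by
  rw [rho, ← mul_assoc, conj_swap, mul_assoc, B.lam_mul, conj_swap']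

lemma key2 (a c : A) :
    B.lam a * MulAut.conj c = B.lam (B.circ a c⁻¹) * B.rho (B.cinv c⁻¹) := by
  rw [← B.conj_eq, ← mul_assoc, B.lam_mul]

lemma key3 (a c : A) :
    B.lam a * MulAut.conj c = B.rho a * MulAut.conj ((B.rho a)⁻¹ a⁻¹ * c) := by
  have h : B.rho a * MulAut.conj ((B.rho a)⁻¹ a⁻¹) = B.lam a := by
    rw [← conj_swap', rho, ← mul_assoc, ← map_mul, inv_mul_cancel, map_one, one_mul]
  rw [map_mul, ← mul_assoc, h]

lemma key4 (a c : A) :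
    B.rho a * MulAut.conj c = B.lam a * MulAut.conj ((B.lam a)⁻¹ a * c) := by
  rw [rho, conj_swap', mul_assoc, ← map_mul]

end SkewBrace

open Pointwise in
/-- Im(lambda) Im(rho) = Im(lambda) Inn(A,*) = Im(rho) Inn(A,*) in Aut(A,*). -/
theorem trifactor {A : Type*} [Group A] (B : SkewBrace A) :
    letI L : Set (MulAut A) := {f | ∃ a : A, ∀ x : A, f x = a⁻¹ * B.circ a x}
    letI R : Set (MulAut A) := {f | ∃ a : A, ∀ x : A, f x = B.circ a x * a⁻¹}
    letI Inn : Set (MulAut A) := {f | ∃ a : A, f = MulAut.conj a}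
    L * R = L * Inn ∧ L * Inn = R * Inn := by
  have memL : ∀ f : MulAut A,
      (∃ a : A, ∀ x : A, f x = a⁻¹ * B.circ a x) ↔ ∃ a : A, f = B.lam a := by
    intro f
    constructor
    · rintro ⟨a, h⟩; exact ⟨a, MulEquiv.ext h⟩
    · rintro ⟨a, rfl⟩; exact ⟨a, fun x => rfl⟩
  have memR : ∀ f : MulAut A,
      (∃ a : A, ∀ x : A, f x = B.circ a x * a⁻¹) ↔ ∃ a : A, f = B.rho a := by
    intro f
    constructor
    · rintro ⟨a, h⟩
      exact ⟨a, MulEquiv.ext fun x => (h x).trans (B.rho_apply a x).symm⟩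
    · rintro ⟨a, rfl⟩; exact ⟨a, fun x => B.rho_apply a x⟩
  constructor
  · ext f
    simp only [Set.mem_mul, Set.mem_setOf_eq, memL, memR]
    constructor
    · rintro ⟨x, ⟨a, rfl⟩, y, ⟨b, rfl⟩, rfl⟩
      exact ⟨B.lam (B.circ a b), ⟨_, rfl⟩,
        MulAut.conj ((B.lam (B.circ a b))⁻¹ (B.lam a b)), ⟨_, rfl⟩, (B.key1 a b).symm⟩
    · rintro ⟨x, ⟨a, rfl⟩, y, ⟨c, rfl⟩, rfl⟩
      exact ⟨B.lam (B.circ a c⁻¹), ⟨_, rfl⟩, B.rho (B.cinv c⁻¹), ⟨_, rfl⟩, (B.key2 a c).symm⟩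
  · ext f
    simp only [Set.mem_mul, Set.mem_setOf_eq, memL, memR]
    constructor
    · rintro ⟨x, ⟨a, rfl⟩, y, ⟨c, rfl⟩, rfl⟩
      exact ⟨B.rho a, ⟨_, rfl⟩,
        MulAut.conj ((B.rho a)⁻¹ a⁻¹ * c), ⟨_, rfl⟩, (B.key3 a c).symm⟩
    · rintro ⟨x, ⟨a, rfl⟩, y, ⟨c, rfl⟩, rfl⟩
      exact ⟨B.lam a, ⟨_, rfl⟩,
        MulAut.conj ((B.lam a)⁻¹ a * c), ⟨_, rfl⟩, (B.key4 a c).symm⟩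
end

section
/- Let $(A,\cdot,\circ)$ be a skew brace with $\lambda:(A,\circ)\to\mathrm{Aut}(A,\cdot)$, $\lambda_a(x)=a^{-1}(a\circ x)$, and let $\mathrm{conj}:(A,\cdot)\to\mathrm{Aut}(A,\cdot)$ be the conjugation homomorphism. Then $J_1:=\{a\in A:\mathrm{conj}(a)\in\mathrm{Im}(\lambda)\}$ is a left ideal of $A$, i.e., $J_1$ is a subgroup of $(A,\cdot)$ with $\lambda_a(J_1)\subseteq J_1$ for all $a\in A$. -/
namespace SkewBraceAux

variable {A : Type*} [Group A] (B : SkewBrace A)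

/-- The lambda map `λ_a(x) = a⁻¹ (a ∘ x)`. -/
def L (a x : A) : A := a⁻¹ * B.circ a x

lemma circ_one (a : A) : B.circ a 1 = a := by
  have h := B.brace a 1 1
  rw [one_mul] at h
  have h2 : B.circ a 1 * 1 = B.circ a 1 * (a⁻¹ * B.circ a 1) := by
    rw [mul_one]; rw [← mul_assoc]; exact h
  have h3 : (1 : A) = a⁻¹ * B.circ a 1 := mul_left_cancel h2
  calc B.circ a 1 = a * (a⁻¹ * B.circ a 1) := by group
    _ = a * 1 := by rw [← h3]
    _ = a := mul_one a

lemma e_eq_one : B.e = 1 := by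
  have h1 := B.e_circ (1 : A)
  have h2 := circ_one B B.e
  rw [h1] at h2
  exact h2.symm

lemma L_mul (a x y : A) : L B a (x * y) = L B a x * L B a y := by
  unfold L
  rw [B.brace]
  group

lemma L_one_right (a : A) : L B a 1 = 1 := by
  unfold L
  rw [circ_one, inv_mul_cancel]

lemma L_inv (a x : A) : L B a x⁻¹ = (L B a x)⁻¹ := by
  have h : L B a x * L B a x⁻¹ = 1 := by
    rw [← L_mul, mul_inv_cancel, L_one_right]
  exact (mul_eq_one_iff_inv_eq.mp h).symm

lemma circ_inv (a x : A) : B.circ a x⁻¹ = a * (B.circ a x)⁻¹ * a := by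
  have h := B.brace a x x⁻¹
  rw [mul_inv_cancel, circ_one] at h
  have h2 : B.circ a x * a⁻¹ * B.circ a x⁻¹ = a := h.symm
  calc B.circ a x⁻¹
      = (B.circ a x * a⁻¹)⁻¹ * (B.circ a x * a⁻¹ * B.circ a x⁻¹) := by group
    _ = (B.circ a x * a⁻¹)⁻¹ * a := by rw [h2]
    _ = a * (B.circ a x)⁻¹ * a := by group

lemma L_comp (a b x : A) : L B a (L B b x) = L B (B.circ a b) x := by
  unfold L
  rw [B.brace, circ_inv, B.circ_assoc]
  group

lemma L_one_left (x : A) : L B 1 x = x := by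
  unfold L
  rw [inv_one, one_mul, ← e_eq_one B, B.e_circ]

lemma L_cinv_L (a x : A) : L B (B.cinv a) (L B a x) = x := by
  rw [L_comp, B.cinv_circ, e_eq_one, L_one_left]

lemma L_L_cinv (a x : A) : L B a (L B (B.cinv a) x) = x := by
  rw [L_comp, B.circ_cinv, e_eq_one, L_one_left]

end SkewBraceAux

open SkewBraceAux in
/-- J1, the preimage of Im(lambda) under conj, is a left ideal of the skew brace. -/
theorem J1_leftIdeal {A : Type*} [Group A] (B : SkewBrace A) :
    letI J1 : Set A := {a | ∃ b : A, ∀ x : A, a * x * a⁻¹ = b⁻¹ * B.circ b x}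
    ∃ S : Subgroup A, (S : Set A) = J1 ∧
      ∀ a : A, ∀ j ∈ J1, a⁻¹ * B.circ a j ∈ J1 := by
  have hL : ∀ b x : A, b⁻¹ * B.circ b x = L B b x := fun _ _ => rfl
  refine ⟨{
    carrier := {a | ∃ b : A, ∀ x : A, a * x * a⁻¹ = b⁻¹ * B.circ b x}
    one_mem' := ⟨1, fun x => by rw [hL, L_one_left]; group⟩
    mul_mem' := ?_
    inv_mem' := ?_ }, rfl, ?_⟩
  · rintro a₁ a₂ ⟨b₁, hb₁⟩ ⟨b₂, hb₂⟩
    refine ⟨B.circ b₁ b₂, fun x => ?_⟩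
    rw [hL, ← L_comp, ← hL b₂, ← hb₂, ← hL b₁, ← hb₁]
    group
  · rintro a ⟨b, hb⟩
    refine ⟨B.cinv b, fun x => ?_⟩
    have key : L B b (a⁻¹ * x * a) = x := by
      rw [← hL, ← hb]; group
    have key2 : L B (B.cinv b) x = a⁻¹ * x * a := by
      conv_lhs => rw [← key]
      rw [L_cinv_L]
    rw [hL, key2]
    group
  · rintro a j ⟨b, hb⟩
    refine ⟨B.circ a (B.circ b (B.cinv a)), fun x => ?_⟩
    have e1 : L B (B.cinv a) x = L B (B.cinv a) x := rfl
    rw [hL, hL, ← L_comp, ← L_comp]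
    have h2 : L B b (L B (B.cinv a) x) = j * L B (B.cinv a) x * j⁻¹ := by
      rw [← hL, ← hb]
    rw [h2, SkewBraceAux.L_mul, SkewBraceAux.L_mul, L_L_cinv, L_inv]
end
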